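/- Let n₁, n₂ ≥ 1 and let X₁, X₂ be n₂×n₁ complex matrices and Y₁, Y₂ be n₁×n₂ complex matrices. The tuple (X₁, X₂, Y₁, Y₂) is a critical point of the function f(X₁, X₂, Y₁, Y₂) = tr(X₁Y₁X₂Y₂ − X₁Y₂X₂Y₁) (i.e. the Fréchet derivative of f vanishes there) if and only if the four relations Y₁X₂Y₂ = Y₂X₂Y₁, Y₂X₁Y₁ = Y₁X₁Y₂, X₂Y₂X₁ = X₁Y₂X₂ and X₁Y₁X₂ = X₂Y₁X₁ hold. -/

import Mathlib

attribute [local instance] Matrix.normedAddCommGroup Matrix.normedSpace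

/-!
Differentiating `tr(P Q R S)` in one factor and rotating that factor to the front by
cyclicity of the trace shows that the derivative of `tr W` at `(X₁, X₂, Y₁, Y₂)` is
`(A, B, C, D) ↦ tr(A ∂_{x₁}W) + tr(B ∂_{x₂}W) + tr(C ∂_{y₁}W) + tr(D ∂_{y₂}W)`,
with `∂` the cyclic derivatives of `W`. The trace pairing is nondegenerate, so this
functional vanishes iff all four cyclic derivatives do.
-/

open Matrix

section

variable {𝕜 : Type*} [NontriviallyNormedField 𝕜] [CompleteSpace 𝕜]
  {l m n o : Type*} [Fintype l] [Fintype m] [Fintype n] [Fintype o]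

variable (𝕜 n) in
noncomputable def Matrix.traceCLM : Matrix n n 𝕜 →L[𝕜] 𝕜 :=
  LinearMap.toContinuousLinearMap (traceLinearMap n 𝕜 𝕜)

variable (𝕜) in
noncomputable def Matrix.traceMulCLM (M : Matrix m n 𝕜) : Matrix n m 𝕜 →L[𝕜] 𝕜 :=
  LinearMap.toContinuousLinearMap (traceLinearMap n 𝕜 𝕜 ∘ₗ mulRightLinearMap n 𝕜 M)

@[simp]
lemma Matrix.traceMulCLM_apply (M : Matrix m n 𝕜) (A : Matrix n m 𝕜) :
    traceMulCLM 𝕜 M A = (A * M).trace := rfl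

lemma Matrix.traceMulCLM_eq_zero_iff {M : Matrix m n 𝕜} : traceMulCLM 𝕜 M = 0 ↔ M = 0 := by
  simp [ContinuousLinearMap.ext_iff, ext_iff_trace_mul_left (A := M) (B := 0)]

variable (𝕜 l m n) in
noncomputable def Matrix.mulCLM :
    Matrix l m 𝕜 →L[𝕜] Matrix m n 𝕜 →L[𝕜] Matrix l n 𝕜 :=
  (mulLinearMap 𝕜).toContinuousBilinearMap

variable {E : Type*} [NormedAddCommGroup E] [NormedSpace 𝕜 E] {x : E}

lemma HasFDerivAt.matrix_mul {u : E → Matrix l m 𝕜} {v : E → Matrix m n 𝕜}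
    {u' : E →L[𝕜] Matrix l m 𝕜} {v' : E →L[𝕜] Matrix m n 𝕜}
    (hu : HasFDerivAt u u' x) (hv : HasFDerivAt v v' x) :
    HasFDerivAt (fun y => u y * v y)
      ((mulCLM 𝕜 l m n).precompR E (u x) v' + (mulCLM 𝕜 l m n).precompL E u' (v x)) x :=
  (mulCLM 𝕜 l m n).hasFDerivAt_of_bilinear hu hv

lemma HasFDerivAt.trace_mul_mul_mul {P : E → Matrix l m 𝕜} {Q : E → Matrix m n 𝕜}
    {R : E → Matrix n o 𝕜} {S : E → Matrix o l 𝕜} {P' : E →L[𝕜] Matrix l m 𝕜}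
    {Q' : E →L[𝕜] Matrix m n 𝕜} {R' : E →L[𝕜] Matrix n o 𝕜} {S' : E →L[𝕜] Matrix o l 𝕜}
    (hP : HasFDerivAt P P' x) (hQ : HasFDerivAt Q Q' x) (hR : HasFDerivAt R R' x)
    (hS : HasFDerivAt S S' x) :
    HasFDerivAt (fun y => (P y * Q y * R y * S y).trace)
      ((traceMulCLM 𝕜 (Q x * R x * S x)).comp P' + (traceMulCLM 𝕜 (R x * S x * P x)).comp Q' +
        (traceMulCLM 𝕜 (S x * P x * Q x)).comp R' +
          (traceMulCLM 𝕜 (P x * Q x * R x)).comp S') x := by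
  refine ((traceCLM 𝕜 l).hasFDerivAt.comp x
    (((hP.matrix_mul hQ).matrix_mul hR).matrix_mul hS)).congr_fderiv ?_
  ext w
  have hP' : (P' w * Q x * R x * S x).trace = (P' w * (Q x * R x * S x)).trace := by
    simp only [Matrix.mul_assoc]
  have hQ' : (P x * Q' w * R x * S x).trace = (Q' w * (R x * S x * P x)).trace := by
    rw [Matrix.mul_assoc (P x * Q' w), Matrix.mul_assoc (P x), trace_mul_comm]
    simp only [Matrix.mul_assoc]
  have hR' : (P x * Q x * R' w * S x).trace = (R' w * (S x * P x * Q x)).trace := by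
    rw [trace_mul_cycle, trace_mul_comm, Matrix.mul_assoc (S x)]
  have hS' : (P x * Q x * R x * S' w).trace = (S' w * (P x * Q x * R x)).trace :=
    trace_mul_comm _ _
  change
    (P x * Q x * R x * S' w + (P x * Q x * R' w + (P x * Q' w + P' w * Q x) * R x) * S x).trace =
      (P' w * (Q x * R x * S x)).trace + (Q' w * (R x * S x * P x)).trace +
      (R' w * (S x * P x * Q x)).trace + (S' w * (P x * Q x * R x)).trace
  simp only [Matrix.add_mul, trace_add]
  linear_combination hP' + hQ' + hR' + hS'

end

lemma ContinuousLinearMap.coprod_eq_zero_iff {R M M₁ M₂ : Type*} [Semiring R]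
    [TopologicalSpace M] [TopologicalSpace M₁] [TopologicalSpace M₂]
    [AddCommMonoid M] [Module R M] [ContinuousAdd M] [AddCommMonoid M₁] [Module R M₁]
    [ContinuousAdd M₁] [AddCommMonoid M₂] [Module R M₂] [ContinuousAdd M₂]
    {f₁ : M₁ →L[R] M} {f₂ : M₂ →L[R] M} :
    f₁.coprod f₂ = 0 ↔ f₁ = 0 ∧ f₂ = 0 :=
  ((coprodEquiv (S := ℕ)).map_eq_zero_iff (x := (f₁, f₂))).trans Prod.mk_eq_zero

lemma hasFDerivAt_trace_conifold {𝕜 : Type*} [NontriviallyNormedField 𝕜] [CompleteSpace 𝕜]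
    {m n : Type*} [Fintype m] [Fintype n]
    (X₁ X₂ : Matrix n m 𝕜) (Y₁ Y₂ : Matrix m n 𝕜) :
    HasFDerivAt
      (fun p : Matrix n m 𝕜 × Matrix n m 𝕜 × Matrix m n 𝕜 × Matrix m n 𝕜 =>
        (p.1 * p.2.2.1 * p.2.1 * p.2.2.2 - p.1 * p.2.2.2 * p.2.1 * p.2.2.1).trace)
      ((traceMulCLM 𝕜 (Y₁ * X₂ * Y₂ - Y₂ * X₂ * Y₁)).coprod <|
        (traceMulCLM 𝕜 (Y₂ * X₁ * Y₁ - Y₁ * X₁ * Y₂)).coprod <|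
          (traceMulCLM 𝕜 (X₂ * Y₂ * X₁ - X₁ * Y₂ * X₂)).coprod <|
            traceMulCLM 𝕜 (X₁ * Y₁ * X₂ - X₂ * Y₁ * X₁))
      (X₁, X₂, Y₁, Y₂) := by
  have hX₁ := hasFDerivAt_fst (𝕜 := 𝕜) (p := (X₁, X₂, Y₁, Y₂))
  have hX₂ := (hasFDerivAt_snd (𝕜 := 𝕜) (p := (X₁, X₂, Y₁, Y₂))).fst
  have hY₁ := (hasFDerivAt_snd (𝕜 := 𝕜) (p := (X₁, X₂, Y₁, Y₂))).snd.fst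
  have hY₂ := (hasFDerivAt_snd (𝕜 := 𝕜) (p := (X₁, X₂, Y₁, Y₂))).snd.snd
  refine (((hX₁.trace_mul_mul_mul hY₁ hX₂ hY₂).sub
    (hX₁.trace_mul_mul_mul hY₂ hX₂ hY₁)).congr_of_eventuallyEq
      (.of_eq (funext fun p => trace_sub _ _))).congr_fderiv ?_
  refine ContinuousLinearMap.ext fun w => ?_
  change (w.1 * (Y₁ * X₂ * Y₂)).trace + (w.2.2.1 * (X₂ * Y₂ * X₁)).trace +
      (w.2.1 * (Y₂ * X₁ * Y₁)).trace + (w.2.2.2 * (X₁ * Y₁ * X₂)).trace -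
    ((w.1 * (Y₂ * X₂ * Y₁)).trace + (w.2.2.2 * (X₂ * Y₁ * X₁)).trace +
      (w.2.1 * (Y₁ * X₁ * Y₂)).trace + (w.2.2.1 * (X₁ * Y₂ * X₂)).trace) =
    (w.1 * (Y₁ * X₂ * Y₂ - Y₂ * X₂ * Y₁)).trace +
      ((w.2.1 * (Y₂ * X₁ * Y₁ - Y₁ * X₁ * Y₂)).trace +
        ((w.2.2.1 * (X₂ * Y₂ * X₁ - X₁ * Y₂ * X₂)).trace +
          (w.2.2.2 * (X₁ * Y₁ * X₂ - X₂ * Y₁ * X₁)).trace))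
  simp only [Matrix.mul_sub, trace_sub]
  ring

theorem critical_conifold_superpotential_iff_general
    (n₁ n₂ : ℕ)
    (X₁ X₂ : Matrix (Fin n₂) (Fin n₁) ℂ) (Y₁ Y₂ : Matrix (Fin n₁) (Fin n₂) ℂ) :
    fderiv ℂ
        (fun p : Matrix (Fin n₂) (Fin n₁) ℂ × Matrix (Fin n₂) (Fin n₁) ℂ ×
            Matrix (Fin n₁) (Fin n₂) ℂ × Matrix (Fin n₁) (Fin n₂) ℂ =>
          (p.1 * p.2.2.1 * p.2.1 * p.2.2.2 - p.1 * p.2.2.2 * p.2.1 * p.2.2.1).trace)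
        (X₁, X₂, Y₁, Y₂) = 0 ↔
      Y₁ * X₂ * Y₂ = Y₂ * X₂ * Y₁ ∧ Y₂ * X₁ * Y₁ = Y₁ * X₁ * Y₂ ∧
        X₂ * Y₂ * X₁ = X₁ * Y₂ * X₂ ∧ X₁ * Y₁ * X₂ = X₂ * Y₁ * X₁ := by
  simp only [(hasFDerivAt_trace_conifold X₁ X₂ Y₁ Y₂).fderiv,
    ContinuousLinearMap.coprod_eq_zero_iff, traceMulCLM_eq_zero_iff, sub_eq_zero]

/-- For the conifold superpotential `W = x₁y₁x₂y₂ − x₁y₂x₂y₁`, a tuple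
`(X₁, X₂, Y₁, Y₂)` of rectangular matrices is a critical point of
`f(X₁,X₂,Y₁,Y₂) = tr(X₁Y₁X₂Y₂ − X₁Y₂X₂Y₁)` (i.e. the Fréchet derivative of `f`
vanishes there) iff the four cyclic-derivative relations hold. -/
theorem critical_conifold_superpotential_iff
    (n₁ n₂ : ℕ) (hn₁ : 1 ≤ n₁) (hn₂ : 1 ≤ n₂)
    (X₁ X₂ : Matrix (Fin n₂) (Fin n₁) ℂ) (Y₁ Y₂ : Matrix (Fin n₁) (Fin n₂) ℂ) :
    fderiv ℂ
        (fun p : Matrix (Fin n₂) (Fin n₁) ℂ × Matrix (Fin n₂) (Fin n₁) ℂ ×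
            Matrix (Fin n₁) (Fin n₂) ℂ × Matrix (Fin n₁) (Fin n₂) ℂ =>
          (p.1 * p.2.2.1 * p.2.1 * p.2.2.2 - p.1 * p.2.2.2 * p.2.1 * p.2.2.1).trace)
        (X₁, X₂, Y₁, Y₂) = 0 ↔
      Y₁ * X₂ * Y₂ = Y₂ * X₂ * Y₁ ∧ Y₂ * X₁ * Y₁ = Y₁ * X₁ * Y₂ ∧
        X₂ * Y₂ * X₁ = X₁ * Y₂ * X₂ ∧ X₁ * Y₁ * X₂ = X₂ * Y₁ * X₁ :=
  critical_conifold_superpotential_iff_general n₁ n₂ X₁ X₂ Y₁ Y₂
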